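/- Let M and A be categories and P : M ⥤ A a functor. Let F_P : A ⥤ Cat denote the functor sending an object W to the comma category CostructuredArrow P W and a morphism w : W ⟶ W' to the postcomposition functor CostructuredArrow P W ⥤ CostructuredArrow P W' (given on objects by (m, f) ↦ (m, f ≫ w)). Then an object (W, (m, x : P.obj m ⟶ W)) of Grothendieck F_P is lax el-generic if and only if x is an isomorphism in A. -/

import Mathlib

open CategoryTheory

universe v₁ u₁ v₂ u₂

namespace LaxFamilial

/-- An object `q` of the Grothendieck construction of `F : A ⥤ Cat` is *lax el-generic*
if for every pair of morphisms `p : q ⟶ b` and `r : c ⟶ b` whose fiber component of `r`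
is an isomorphism, there is a unique `w : q ⟶ c` with `w ≫ r = p`, and moreover the fiber
component of any such `w` is an isomorphism whenever that of `p` is. -/
def LaxElGeneric {A : Type u₂} [Category.{v₂} A] (F : A ⥤ Cat) (q : Grothendieck F) : Prop :=
  ∀ ⦃b c : Grothendieck F⦄ (p : q ⟶ b) (r : c ⟶ b), IsIso r.fiber →
    (∃! w : q ⟶ c, w ≫ r = p) ∧
      ∀ w : q ⟶ c, w ≫ r = p → IsIso p.fiber → IsIso w.fiber

variable {M : Type u₁} [Category.{v₁} M] {A : Type u₂} [Category.{v₂} A]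

/-- The functor `A ⥤ Cat` sending `W` to the comma category `CostructuredArrow P W` and a
morphism `w : W ⟶ W'` to the postcomposition functor, given on objects by
`(m, f) ↦ (m, f ≫ w)`. -/
def costructuredArrowFunctor (P : M ⥤ A) : A ⥤ Cat where
  obj W := Cat.of (CostructuredArrow P W)
  map w := (CostructuredArrow.map w).toCatHom
  map_id W := by
    apply Cat.Hom.ext
    show CostructuredArrow.map (𝟙 W) = 𝟭 (CostructuredArrow P W)
    fapply CategoryTheory.Functor.ext
    · intro x
      exact CostructuredArrow.map_id
    · intro x y u
      ext
      simp [CostructuredArrow.eqToHom_left]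
  map_comp f g := by
    apply Cat.Hom.ext
    show CostructuredArrow.map (_ ≫ _) = CostructuredArrow.map _ ⋙ CostructuredArrow.map _
    fapply CategoryTheory.Functor.ext
    · intro x
      exact CostructuredArrow.map_comp
    · intro x y u
      ext
      simp [CostructuredArrow.eqToHom_left]

private lemma isIso_of_left {C : Type*} [Category C] {D : Type*} [Category D] {S : C ⥤ D} {T : D}
    {X Y : CostructuredArrow S T} (f : X ⟶ Y) (h : IsIso f.left) : IsIso f := by
  have : IsIso ((CostructuredArrow.proj S T).map f) := h
  exact isIso_of_reflects_iso f (CostructuredArrow.proj S T)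

private lemma isIso_proj_map' (P : M ⥤ A) {W : A} {X Y : (costructuredArrowFunctor P).obj W}
    (f : X ⟶ Y) (hf : IsIso f) : IsIso ((CostructuredArrow.proj P W).map f) :=
  ⟨⟨(inv f).left, congrArg CommaMorphism.left (IsIso.hom_inv_id f),
    congrArg CommaMorphism.left (IsIso.inv_hom_id f)⟩⟩

private lemma comp_left' (P : M ⥤ A) {W : A} {X Y Z : (costructuredArrowFunctor P).obj W}
    (f : X ⟶ Y) (g : Y ⟶ Z) : (f ≫ g).left = f.left ≫ g.left := rfl

private lemma eqToHom_left' (P : M ⥤ A) {W : A} {X Y : (costructuredArrowFunctor P).obj W}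
    (h : X = Y) : (eqToHom h).left = eqToHom (congrArg (fun Z : CostructuredArrow P W => Z.left) h) := by
  subst h; rfl

theorem laxElGeneric_iff_isIso (P : M ⥤ A) (W : A) (m : M) (x : P.obj m ⟶ W) :
    LaxElGeneric (costructuredArrowFunctor P)
        ({ base := W, fiber := CostructuredArrow.mk x } : Grothendieck (costructuredArrowFunctor P)) ↔
      IsIso x := by
  constructor
  · -- forward: generic → iso
    intro hgen
    set q : Grothendieck (costructuredArrowFunctor P) :=
      { base := W, fiber := CostructuredArrow.mk x } with hq
    let c : Grothendieck (costructuredArrowFunctor P) :=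
      { base := P.obj m, fiber := CostructuredArrow.mk (𝟙 (P.obj m)) }
    let rfib : ((costructuredArrowFunctor P).map x).toFunctor.obj c.fiber ⟶ q.fiber :=
      CostructuredArrow.homMk (𝟙 m) (by show P.map (𝟙 m) ≫ x = 𝟙 (P.obj m) ≫ x; simp)
    let r : c ⟶ q := { base := x, fiber := rfib }
    have hrfib : IsIso r.fiber := isIso_of_left rfib (by show IsIso (𝟙 m); infer_instance)
    obtain ⟨⟨w, hw, _⟩, hiso⟩ := hgen (𝟙 q) r hrfib
    have hwf : IsIso w.fiber := hiso w hw (by rw [Grothendieck.id_fiber]; infer_instance)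
    have hbase : w.base ≫ x = 𝟙 W := congrArg Grothendieck.Hom.base hw
    have hleft : IsIso ((CostructuredArrow.proj P (P.obj m)).map w.fiber) :=
      isIso_proj_map' P w.fiber hwf
    have hcond' : P.map ((CostructuredArrow.proj P (P.obj m)).map w.fiber) = x ≫ w.base := by
      exact (Category.comp_id _).symm.trans (CostructuredArrow.w w.fiber)
    have hm1 : Mono (x ≫ w.base) := by
      rw [← hcond']; exact @IsIso.mono_of_iso _ _ _ _ _ (@Functor.map_isIso _ _ _ _ _ _ P _ hleft)
    have hmono : Mono x := mono_of_mono x w.base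
    have : IsSplitEpi x := ⟨⟨⟨w.base, hbase⟩⟩⟩
    exact isIso_of_mono_of_isSplitEpi x
  · -- backward: iso → generic
    intro hx b c p r hr
    let q : Grothendieck (costructuredArrowFunctor P) :=
      { base := W, fiber := CostructuredArrow.mk x }
    have hs : IsIso ((CostructuredArrow.proj P b.base).map r.fiber) :=
      isIso_proj_map' P r.fiber hr
    let s : c.fiber.left ⟶ b.fiber.left := (CostructuredArrow.proj P b.base).map r.fiber
    have hs' : IsIso s := hs
    let lf : ∀ {d : Grothendieck (costructuredArrowFunctor P)} (f : q ⟶ d),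
        (m ⟶ d.fiber.left) := fun {d} f => f.fiber.left
    have hpcond : P.map (lf p) ≫ b.fiber.hom = x ≫ p.base := by
      simpa [costructuredArrowFunctor, lf] using CostructuredArrow.w p.fiber
    have hrcond : P.map s ≫ b.fiber.hom = c.fiber.hom ≫ r.base := by
      exact CostructuredArrow.w r.fiber
    let h : m ⟶ c.fiber.left := lf p ≫ inv s
    let v : W ⟶ c.base := inv x ≫ P.map h ≫ c.fiber.hom
    have hPh : P.map h ≫ P.map s = P.map (lf p) := by
      rw [← P.map_comp]; simp [h]
    have hvt : v ≫ r.base = p.base := by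
      rw [← cancel_epi x]
      calc x ≫ v ≫ r.base = P.map h ≫ c.fiber.hom ≫ r.base := by simp [v]
        _ = P.map h ≫ P.map s ≫ b.fiber.hom := by rw [← hrcond]
        _ = P.map (lf p) ≫ b.fiber.hom := by rw [← hPh]; simp
        _ = x ≫ p.base := hpcond
    let w : q ⟶ c :=
      { base := v
        fiber := CostructuredArrow.homMk h (by show _ = x ≫ v; simp [v]; rfl) }
    have hlw : lf w = h := rfl
    -- key computation: left of composite fiber
    have hcompleft : ∀ (w' : q ⟶ c), lf (w' ≫ r) = lf w' ≫ s := by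
      intro w'
      show ((w' ≫ r).fiber).left = _
      rw [Grothendieck.comp_fiber]
      erw [comp_left', comp_left', eqToHom_left', eqToHom_refl, Category.id_comp]
      rfl
    -- condition extraction for arbitrary w'
    have hwcond : ∀ (w' : q ⟶ c), P.map (lf w') ≫ c.fiber.hom = x ≫ w'.base := by
      intro w'
      exact CostructuredArrow.w w'.fiber
    have hw : w ≫ r = p := by
      refine Grothendieck.ext _ _ hvt ?_
      apply CostructuredArrow.hom_ext
      have hl : lf (w ≫ r) = lf p := by
        rw [hcompleft, hlw]; simp [h]
      show (eqToHom _ ≫ (w ≫ r).fiber).left = p.fiber.left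
      erw [comp_left', eqToHom_left', eqToHom_refl, Category.id_comp]
      exact hl
    refine ⟨⟨w, hw, ?_⟩, ?_⟩
    · intro w' hw'
      have hl : lf w' ≫ s = lf p := by rw [← hcompleft, hw']
      have hl' : lf w' = h := by
        rw [← cancel_mono s, hl]; simp [h]
      have hb : w'.base = v := by
        have hc := hwcond w'
        rw [hl'] at hc
        rw [← cancel_epi x, ← hc]; simp [v]
      refine Grothendieck.ext _ _ hb ?_
      apply CostructuredArrow.hom_ext
      erw [comp_left', eqToHom_left', eqToHom_refl, Category.id_comp]
      exact hl'
    · intro w' hw' hp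
      have hg : IsIso (lf p) :=
        isIso_proj_map' P p.fiber hp
      have hl' : lf w' = lf p ≫ inv s := by
        rw [← cancel_mono s, ← hcompleft, hw']; simp
      have : IsIso (lf w') := by rw [hl']; infer_instance
      exact isIso_of_left w'.fiber this


end LaxFamilial
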